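/- arXiv:0905.0008 — 2 statements merged into one kernel-verified Lean document; each statement's English description precedes it below -/
import Mathlib

section
/- Moving the base point past one crossing changes the based warping degree by exactly one: if W = x :: T is a Gauss word, then the based warping degree of T ++ [x] equals the based warping degree of W plus 1 when the flag of x is true (the base point passes an over-crossing), and equals it minus 1 when the flag of x is false. -/
/-- A Gauss word on `n` labels: each label occurs exactly twice,
once with flag `true` (over-passage) and once with flag `false` (under-passage). -/
def IsGaussWord {n : ℕ} (W : List (Fin n × Bool)) : Prop :=
  ∀ i : Fin n, W.count (i, true) = 1 ∧ W.count (i, false) = 1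

/-- Based warping degree: the number of labels whose first occurrence carries flag `false`. -/
def basedWd {n : ℕ} (W : List (Fin n × Bool)) : ℕ :=
  (Finset.univ.filter fun i : Fin n =>
    W.idxOf (i, false) < W.idxOf (i, true)).card

/-- Warping degree of a Gauss word: minimum of the based warping degree
over all cyclic rotations. -/
noncomputable def wd {n : ℕ} (W : List (Fin n × Bool)) : ℕ :=
  sInf {v | ∃ k : ℕ, v = basedWd (W.rotate k)}

/-- A Gauss word is alternating if the flags of consecutive entries alternate. -/
def IsAlternating {n : ℕ} (W : List (Fin n × Bool)) : Prop :=
  W.Chain' fun x y => y.2 = !x.2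

/-- Based linking warping degree for the ordering given by `σ`
(component `i` precedes `j` when `σ i < σ j`). -/
def ldSigma {r : ℕ} (m : Fin r → Fin r → ℕ) (σ : Equiv.Perm (Fin r)) : ℕ :=
  ∑ p ∈ Finset.univ.filter (fun p : Fin r × Fin r => σ p.1 < σ p.2), m p.1 p.2

/-- Linking warping degree: minimum over all orderings. -/
noncomputable def linkLd {r : ℕ} (m : Fin r → Fin r → ℕ) : ℕ :=
  sInf {v | ∃ σ : Equiv.Perm (Fin r), v = ldSigma m σ}

/-- Linking crossing number: number of non-self crossings. -/
def lcNum {r : ℕ} (m : Fin r → Fin r → ℕ) : ℕ :=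
  ∑ p ∈ Finset.univ.filter (fun p : Fin r × Fin r => p.1 ≠ p.2), m p.1 p.2

/-- Warping degree of an ordered link diagram: minimum over all orderings `σ`
and all choices of cyclic rotations (base points) of the components. -/
noncomputable def linkWd {r : ℕ} {n : Fin r → ℕ} (W : ∀ i, List (Fin (n i) × Bool))
    (m : Fin r → Fin r → ℕ) : ℕ :=
  sInf {v | ∃ (σ : Equiv.Perm (Fin r)) (k : Fin r → ℕ),
    v = (∑ i, basedWd ((W i).rotate (k i))) + ldSigma m σ}

/-- Crossing number of the link diagram. -/
def crossingNum {r : ℕ} (n : Fin r → ℕ) (m : Fin r → Fin r → ℕ) : ℕ :=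
  (∑ i, n i) + ∑ p ∈ Finset.univ.filter (fun p : Fin r × Fin r => p.1 < p.2),
    (m p.1 p.2 + m p.2 p.1)

/-- The number of components having at least one self-crossing. -/
def srNum {r : ℕ} (n : Fin r → ℕ) : ℕ :=
  (Finset.univ.filter fun i : Fin r => 1 ≤ n i).card

/-- Property C: every component word is alternating and, for each pair of distinct
components, the number of over-crossings equals the number of under-crossings. -/
def PropertyC {r : ℕ} {n : Fin r → ℕ} (W : ∀ i, List (Fin (n i) × Bool))
    (m : Fin r → Fin r → ℕ) : Prop :=
  (∀ i, IsAlternating (W i)) ∧ ∀ i j : Fin r, i ≠ j → m i j = m j i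

/-! Only the status of the label `x.1` changes. Every other label has both occurrences in `T`,
so their relative order is the same in `x :: T` and `T ++ [x]`; the label `x.1` is first met
through `x` itself in `x :: T`, but through its partner `(x.1, !x.2)` in `T ++ [x]`. -/

open Finset

theorem card_filter_eq_card_filter_add_one {ι : Type*} [Fintype ι] [DecidableEq ι]
    {p q : ι → Prop} [DecidablePred p] [DecidablePred q] {a : ι} (hpa : ¬p a) (hqa : q a)
    (hpq : ∀ i ≠ a, p i ↔ q i) : #{i | q i} = #{i | p i} + 1 := by
  have : univ.filter q = insert a (univ.filter p) := by
    ext i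
    by_cases hi : i = a
    · subst hi; simp [hqa]
    · simp [hi, hpq i hi]
  rw [this, card_insert_of_notMem (by simpa using hpa)]

namespace IsGaussWord

variable {n : ℕ} {x : Fin n × Bool} {T : List (Fin n × Bool)}

theorem count_eq_one {W : List (Fin n × Bool)} (hW : IsGaussWord W) (y : Fin n × Bool) :
    W.count y = 1 := by
  obtain ⟨i, _ | _⟩ := y
  exacts [(hW i).2, (hW i).1]

theorem notMem_tail (hW : IsGaussWord (x :: T)) : x ∉ T := by
  have := hW.count_eq_one x
  rw [List.count_cons_self] at this
  exact List.count_eq_zero.1 (by omega)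

theorem mem_tail_of_ne (hW : IsGaussWord (x :: T)) {y : Fin n × Bool} (hy : y ≠ x) : y ∈ T := by
  have := hW.count_eq_one y
  rw [List.count_cons_of_ne hy.symm] at this
  exact List.count_pos_iff.1 (by omega)

end IsGaussWord

section UnderFirst

variable {n : ℕ}

def UnderFirst (W : List (Fin n × Bool)) (i : Fin n) : Prop :=
  W.idxOf (i, false) < W.idxOf (i, true)

instance (W : List (Fin n × Bool)) : DecidablePred (UnderFirst W) :=
  fun _ => Nat.decLt _ _

theorem basedWd_eq_card_underFirst (W : List (Fin n × Bool)) :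
    basedWd W = #{i | UnderFirst W i} :=
  rfl

theorem underFirst_cons_self_iff (x : Fin n × Bool) (T : List (Fin n × Bool)) :
    UnderFirst (x :: T) x.1 ↔ x.2 = false := by
  obtain ⟨a, _ | _⟩ := x <;> simp [UnderFirst]

variable {x : Fin n × Bool} {T : List (Fin n × Bool)}

theorem IsGaussWord.underFirst_append_singleton_self_iff (hW : IsGaussWord (x :: T)) :
    UnderFirst (T ++ [x]) x.1 ↔ x.2 = true := by
  obtain ⟨a, b⟩ := x
  have hx : (a, b) ∉ T := hW.notMem_tail
  have hx' : (a, !b) ∈ T := hW.mem_tail_of_ne (by simp)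
  have hlt : (T ++ [(a, b)]).idxOf (a, !b) < (T ++ [(a, b)]).idxOf (a, b) := by
    rw [List.idxOf_append_of_mem hx', List.idxOf_append_of_notMem hx, List.idxOf_cons_self]
    exact List.idxOf_lt_length_of_mem hx'
  cases b
  · simpa [UnderFirst] using hlt.le
  · simpa [UnderFirst] using hlt

theorem IsGaussWord.underFirst_append_singleton_iff (hW : IsGaussWord (x :: T)) {i : Fin n}
    (hi : i ≠ x.1) : UnderFirst (T ++ [x]) i ↔ UnderFirst (x :: T) i := by
  have hne (b : Bool) : (i, b) ≠ x := fun h => hi (by rw [← h])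
  simp only [UnderFirst, List.idxOf_append_of_mem (hW.mem_tail_of_ne (hne _)),
    List.idxOf_cons_ne _ (hne _).symm, Nat.succ_lt_succ_iff]

end UnderFirst

/-- moving the base point past one crossing changes the based
warping degree by exactly one. -/
theorem basedWd_move_base_point (n : ℕ) (x : Fin n × Bool) (T : List (Fin n × Bool))
    (hW : IsGaussWord (x :: T)) :
    (x.2 = true → basedWd (T ++ [x]) = basedWd (x :: T) + 1) ∧
    (x.2 = false → basedWd (T ++ [x]) + 1 = basedWd (x :: T)) := by
  have hnew := hW.underFirst_append_singleton_self_iff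
  have hold := underFirst_cons_self_iff x T
  have hrest (i : Fin n) (hi : i ≠ x.1) := hW.underFirst_append_singleton_iff hi
  simp only [basedWd_eq_card_underFirst]
  refine ⟨fun hb => ?_, fun hb => ?_⟩
  · exact card_filter_eq_card_filter_add_one (by simp [hold, hb]) (hnew.2 hb)
      fun i hi => (hrest i hi).symm
  · exact (card_filter_eq_card_filter_add_one (by simp [hnew, hb]) (hold.2 hb) hrest).symm
end

section
/- For an r-component link diagram D, the equality 2 · d(|D|) = c(D) holds if and only if n i = 0 for every i (each component is a simple closed curve, having no self-crossings) and m i j = m j i for all i ≠ j (in every two-component subdiagram the number of over-crossings of a component equals the number of its under-crossings). -/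
/-!
Reversing every component and reversing the order of the components pairs each choice of
orientations, base points and ordering with a dual choice whose based warping degree is
complementary: a self-crossing met first as an under-passage is met first as an over-passage
after reversal, and a crossing between two components is counted for exactly one of an ordering
and its reverse. The two values therefore add up to `c(D)`, so `2 · d(|D|) = c(D)` exactly when
all based values coincide. Moving a base point past one crossing changes the based warping
degree of a component by one, and swapping two adjacent components in the ordering trades
`m i j` for `m j i`; so constancy forces `n i = 0` and `m i j = m j i`, and conversely these make
every based value equal to half the number of crossings.
-/

theorem List.idxOf_reverse_of_count_eq_one {α : Type*} [BEq α] [LawfulBEq α] {l : List α} {x : α}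
    (h : l.count x = 1) : l.reverse.idxOf x = l.length - 1 - l.idxOf x := by
  have hx : x ∈ l := List.count_pos_iff.mp (by omega)
  obtain ⟨s, t, rfl⟩ := List.append_of_mem hx
  simp only [List.count_append, List.count_cons_self] at h
  have hs : x ∉ s := List.count_eq_zero.mp (by omega)
  have ht : x ∉ t := List.count_eq_zero.mp (by omega)
  rw [List.reverse_append, List.reverse_cons, List.append_assoc,
    List.idxOf_append_of_notMem (by simpa using ht), List.idxOf_append_of_notMem hs]
  simp

theorem Finset.sum_eq_sum_iff_of_eq_off {ι M : Type*} [DecidableEq ι] [AddCommMonoid M]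
    [IsRightCancelAdd M] {s : Finset ι} {i : ι} {f g : ι → M} (hi : i ∈ s)
    (h : ∀ j ∈ s, j ≠ i → f j = g j) :
    ∑ j ∈ s, f j = ∑ j ∈ s, g j ↔ f i = g i := by
  rw [← Finset.add_sum_erase s f hi, ← Finset.add_sum_erase s g hi,
    Finset.sum_congr rfl fun j hj => h j (Finset.mem_of_mem_erase hj) (Finset.ne_of_mem_erase hj),
    add_left_inj]

namespace IsGaussWord

variable {N : ℕ} {l : List (Fin N × Bool)}

theorem count_eq_one_s12 (h : IsGaussWord l) (x : Fin N × Bool) : l.count x = 1 := by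
  obtain ⟨i, _ | _⟩ := x
  exacts [(h i).2, (h i).1]

theorem rotate (h : IsGaussWord l) (k : ℕ) : IsGaussWord (l.rotate k) := fun i => by
  simpa only [(List.rotate_perm l k).count_eq] using h i

theorem reverse (h : IsGaussWord l) : IsGaussWord l.reverse := fun i => by
  simpa only [List.count_reverse] using h i

theorem idxOf_lt_length (h : IsGaussWord l) (x : Fin N × Bool) : l.idxOf x < l.length :=
  List.idxOf_lt_length_iff.mpr (List.count_pos_iff.mp (by simp [h.count_eq_one_s12 x]))

end IsGaussWord

theorem basedWd_le {N : ℕ} (l : List (Fin N × Bool)) : basedWd l ≤ N :=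
  (Finset.card_filter_le _ _).trans_eq (Finset.card_fin N)

theorem basedWd_add_basedWd_reverse {N : ℕ} {l : List (Fin N × Bool)} (h : IsGaussWord l) :
    basedWd l + basedWd l.reverse = N := by
  have hrev : ∀ i : Fin N, l.reverse.idxOf (i, false) < l.reverse.idxOf (i, true) ↔
      ¬ l.idxOf (i, false) < l.idxOf (i, true) := fun i => by
    have hne : l.idxOf (i, false) ≠ l.idxOf (i, true) := fun heq => by
      simpa using (List.idxOf_inj (List.count_pos_iff.mp (by simp [h.count_eq_one_s12]))).mp heq
    rw [List.idxOf_reverse_of_count_eq_one (h.count_eq_one_s12 _),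
      List.idxOf_reverse_of_count_eq_one (h.count_eq_one_s12 _)]
    have := h.idxOf_lt_length (i, false)
    have := h.idxOf_lt_length (i, true)
    omega
  rw [basedWd, basedWd, Finset.filter_congr fun i _ => hrev i,
    Finset.card_filter_add_card_filter_not, Finset.card_univ, Fintype.card_fin]

theorem basedWd_rotate_one_ne {N : ℕ} {a : Fin N × Bool} {t : List (Fin N × Bool)}
    (h : IsGaussWord (a :: t)) : basedWd ((a :: t).rotate 1) ≠ basedWd (a :: t) := by
  have ha : a ∉ t := by
    have := h.count_eq_one_s12 a
    simp_all [← List.count_eq_zero]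
  have hmem : ∀ x, x ≠ a → x ∈ t := fun x hx => by
    have := h.count_eq_one_s12 x
    rw [List.count_cons_of_ne (Ne.symm hx)] at this
    exact List.count_pos_iff.mp (by omega)
  obtain ⟨i, f⟩ := a
  rw [List.rotate_cons_succ, List.rotate_zero, Ne, basedWd, basedWd, Finset.card_filter,
    Finset.card_filter, Finset.sum_eq_sum_iff_of_eq_off (Finset.mem_univ i)]
  · have hi := hmem (i, !f) (by simp)
    have := List.idxOf_lt_length_iff.mpr hi
    cases f <;> simp only [Bool.not_true, Bool.not_false] at hi this <;>
      simp [List.idxOf_append_of_mem hi, List.idxOf_append_of_notMem ha] <;> omega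
  · intro j _ hj
    have hne : ∀ b, (j, b) ≠ (i, f) := by simp [hj]
    simp only [List.idxOf_append_of_mem (hmem _ (hne _)), List.idxOf_cons_ne _ (hne _).symm,
      Nat.succ_lt_succ_iff]

section LinkingWarpingDegree

variable {r : ℕ} (m : Fin r → Fin r → ℕ)

theorem ldSigma_trans_revPerm (σ : Equiv.Perm (Fin r)) :
    ldSigma m (σ.trans Fin.revPerm) = ldSigma (fun a b => m b a) σ :=
  Finset.sum_equiv (Equiv.prodComm _ _) (by simp [Fin.rev_lt_rev]) (by simp)

theorem ldSigma_add_ldSigma_trans_revPerm (σ : Equiv.Perm (Fin r)) :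
    ldSigma m σ + ldSigma m (σ.trans Fin.revPerm) = lcNum m := by
  rw [lcNum, ← Finset.sum_filter_add_sum_filter_not _ fun p => σ p.1 < σ p.2,
    Finset.filter_filter, Finset.filter_filter, ldSigma, ldSigma]
  congr 2 <;> ext ⟨a, b⟩ <;> simp only [Finset.mem_filter, Finset.mem_univ, true_and,
    Equiv.trans_apply, Fin.revPerm_apply, Fin.rev_lt_rev]
  · exact ⟨fun h => ⟨fun hab => h.ne (congrArg σ hab), h⟩, And.right⟩
  · exact ⟨fun h => ⟨fun hab => h.ne' (congrArg σ hab), lt_asymm h⟩,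
      fun ⟨hab, h⟩ => (not_lt.mp h).lt_of_ne' (σ.injective.ne hab)⟩

theorem crossingNum_eq_sum_add_lcNum (n : Fin r → ℕ) :
    crossingNum n m = ∑ i, n i + lcNum m := by
  rw [crossingNum, Finset.sum_add_distrib, ← ldSigma_add_ldSigma_trans_revPerm m 1,
    ldSigma_trans_revPerm]
  rfl

theorem ldSigma_flip_of_symm (hsym : ∀ i j : Fin r, i ≠ j → m i j = m j i)
    (σ : Equiv.Perm (Fin r)) : ldSigma (fun a b => m b a) σ = ldSigma m σ :=
  Finset.sum_congr rfl fun _ hp =>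
    (hsym _ _ fun h => (Finset.mem_filter.mp hp).2.ne (congrArg σ h)).symm

theorem two_mul_ldSigma_of_symm (hsym : ∀ i j : Fin r, i ≠ j → m i j = m j i)
    (σ : Equiv.Perm (Fin r)) : 2 * ldSigma m σ = lcNum m := by
  rw [← ldSigma_add_ldSigma_trans_revPerm m σ, ldSigma_trans_revPerm, ldSigma_flip_of_symm m hsym]
  ring

theorem swap_lt_swap_iff_of_succ {u v x y : Fin r} (huv : (v : ℕ) = u + 1) :
    Equiv.swap u v x < Equiv.swap u v y ↔ x < y ∧ ¬(x = u ∧ y = v) ∨ x = v ∧ y = u := by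
  simp only [Equiv.swap_apply_def]
  split_ifs <;> simp_all [Fin.ext_iff] <;> omega

theorem ldSigma_trans_swap_add {σ : Equiv.Perm (Fin r)} {i j : Fin r}
    (hσ : (σ j : ℕ) = σ i + 1) :
    ldSigma m (σ.trans (Equiv.swap (σ i) (σ j))) + m i j = ldSigma m σ + m j i := by
  have hmem : (i, j) ∈ Finset.univ.filter fun p : Fin r × Fin r => σ p.1 < σ p.2 := by
    simp only [Finset.mem_filter, Finset.mem_univ, true_and, Fin.lt_def]
    omega
  have hfilter : (Finset.univ.filter fun p : Fin r × Fin r =>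
      σ.trans (Equiv.swap (σ i) (σ j)) p.1 < σ.trans (Equiv.swap (σ i) (σ j)) p.2) =
      insert (j, i) ((Finset.univ.filter fun p : Fin r × Fin r => σ p.1 < σ p.2).erase (i, j)) := by
    ext ⟨a, b⟩
    simp only [Equiv.trans_apply, swap_lt_swap_iff_of_succ hσ, σ.injective.eq_iff,
      Finset.mem_filter, Finset.mem_univ, true_and, Finset.mem_insert, Finset.mem_erase,
      Prod.mk.injEq, ne_eq]
    tauto
  have hji :
      (j, i) ∉ (Finset.univ.filter fun p : Fin r × Fin r => σ p.1 < σ p.2).erase (i, j) := by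
    simp only [Finset.mem_erase, Finset.mem_filter, Finset.mem_univ, true_and, Fin.lt_def]
    omega
  rw [ldSigma, hfilter, Finset.sum_insert hji, ldSigma, ← Finset.add_sum_erase _ _ hmem]
  ring

theorem exists_perm_apply_eq_apply_eq {α : Type*} [DecidableEq α] {a b x y : α} (hab : a ≠ b)
    (hxy : x ≠ y) : ∃ e : Equiv.Perm α, e a = x ∧ e b = y := by
  set w := Equiv.swap a x
  have hwb : w b ≠ x := fun h => hab (w.injective (h.trans (Equiv.swap_apply_left a x).symm).symm)
  exact ⟨w.trans (Equiv.swap (w b) y), by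
    simp [w, Equiv.swap_apply_of_ne_of_ne hwb.symm hxy], by simp⟩

theorem symm_of_ldSigma_const (hconst : ∀ σ τ : Equiv.Perm (Fin r), ldSigma m σ = ldSigma m τ)
    {i j : Fin r} (hij : i ≠ j) : m i j = m j i := by
  have hr : 1 < r := by
    by_contra! h
    exact hij (Fin.ext (by omega))
  obtain ⟨σ, hσi, hσj⟩ := exists_perm_apply_eq_apply_eq hij
    (show (⟨0, by omega⟩ : Fin r) ≠ ⟨1, hr⟩ by simp)
  have := ldSigma_trans_swap_add m (σ := σ) (i := i) (j := j) (by rw [hσi, hσj])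
  rw [hconst (σ.trans _) σ] at this
  omega

end LinkingWarpingDegree

theorem Nat.sInf_setOf_sInf_eq_sInf_iUnion {ι : Type*} [Nonempty ι] (X : ι → Set ℕ)
    (hX : ∀ i, (X i).Nonempty) : sInf {v | ∃ i, v = sInf (X i)} = sInf (⋃ i, X i) := by
  obtain ⟨i, hi⟩ := Nat.sInf_mem
    (⟨_, Set.mem_ofPred.mpr ⟨Classical.arbitrary ι, rfl⟩⟩ : {v | ∃ i, v = sInf (X i)}.Nonempty)
  obtain ⟨j, hj⟩ := Set.mem_iUnion.mp
    (Nat.sInf_mem (Set.nonempty_iUnion.mpr ⟨Classical.arbitrary ι, hX _⟩))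
  apply le_antisymm
  · exact (Nat.sInf_le (Set.mem_ofPred.mpr ⟨j, rfl⟩)).trans (Nat.sInf_le hj)
  · exact hi ▸ Nat.sInf_le (Set.mem_iUnion.mpr ⟨i, Nat.sInf_mem (hX i)⟩)

theorem Nat.two_mul_sInf_eq_iff {X : Set ℕ} {c : ℕ} (hX : X.Nonempty)
    (hpair : ∀ x ∈ X, ∃ y ∈ X, x + y = c) : 2 * sInf X = c ↔ ∀ x ∈ X, 2 * x = c := by
  refine ⟨fun h x hx => ?_, fun h => h _ (Nat.sInf_mem hX)⟩
  obtain ⟨y, hy, hxy⟩ := hpair x hx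
  have := Nat.sInf_le hx
  have := Nat.sInf_le hy
  omega

section BasedLinkWd

variable {r : ℕ} {n : Fin r → ℕ} (W : ∀ i, List (Fin (n i) × Bool)) (m : Fin r → Fin r → ℕ)

def basedLinkWd (σ : Equiv.Perm (Fin r)) (k : Fin r → ℕ) : ℕ :=
  (∑ i, basedWd ((W i).rotate (k i))) + ldSigma m σ

theorem basedLinkWd_add_reverse (hW : ∀ i, IsGaussWord (W i)) (σ : Equiv.Perm (Fin r))
    (k : Fin r → ℕ) :
    basedLinkWd W m σ k + basedLinkWd (fun i => (W i).reverse) m (σ.trans Fin.revPerm)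
      (fun i => (W i).length - k i % (W i).length) = crossingNum n m := by
  have hwords : ∑ i, basedWd ((W i).rotate (k i)) +
      ∑ i, basedWd ((W i).reverse.rotate ((W i).length - k i % (W i).length)) = ∑ i, n i := by
    rw [← Finset.sum_add_distrib]
    refine Finset.sum_congr rfl fun i _ => ?_
    rw [← List.reverse_rotate]
    exact basedWd_add_basedWd_reverse ((hW i).rotate (k i))
  rw [basedLinkWd, basedLinkWd, crossingNum_eq_sum_add_lcNum, ← hwords,
    ← ldSigma_add_ldSigma_trans_revPerm m σ]
  ring

theorem two_mul_basedLinkWd_of_eq_zero_of_symm (hn : ∀ i, n i = 0)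
    (hsym : ∀ i j : Fin r, i ≠ j → m i j = m j i) (σ : Equiv.Perm (Fin r)) (k : Fin r → ℕ) :
    2 * basedLinkWd W m σ k = crossingNum n m := by
  have hwords : ∀ i, basedWd ((W i).rotate (k i)) = 0 := fun i =>
    Nat.eq_zero_of_le_zero ((basedWd_le _).trans_eq (hn i))
  simp [basedLinkWd, hwords, hn, crossingNum_eq_sum_add_lcNum, two_mul_ldSigma_of_symm m hsym]

theorem eq_zero_and_symm_of_basedLinkWd_const (hW : ∀ i, IsGaussWord (W i))
    (hconst : ∀ σ k τ l, basedLinkWd W m σ k = basedLinkWd W m τ l) :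
    (∀ i, n i = 0) ∧ ∀ i j : Fin r, i ≠ j → m i j = m j i := by
  refine ⟨fun i => ?_, fun i j => symm_of_ldSigma_const m fun σ τ => ?_⟩
  · by_contra hi
    have hne : W i ≠ [] := fun h => by simpa [h] using (hW i ⟨0, Nat.pos_of_ne_zero hi⟩).1
    obtain ⟨a, t, hat⟩ := List.exists_cons_of_ne_nil hne
    have := hconst 1 (Function.update 0 i 1) 1 0
    rw [basedLinkWd, basedLinkWd, add_left_inj,
      Finset.sum_eq_sum_iff_of_eq_off (Finset.mem_univ i) (by simp +contextual)] at this
    simp only [Function.update_self, Pi.zero_apply, List.rotate_zero, hat] at this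
    exact basedWd_rotate_one_ne (hat ▸ hW i) this
  · simpa [basedLinkWd] using hconst σ 0 τ 0

end BasedLinkWd

theorem two_unoriented_wd_eq_crossingNum_iff_general (r : ℕ) (n : Fin r → ℕ)
    (W : ∀ i, List (Fin (n i) × Bool)) (m : Fin r → Fin r → ℕ)
    (hW : ∀ i, IsGaussWord (W i)) :
    2 * sInf {v | ∃ S : Finset (Fin r),
        v = linkWd (fun i => if i ∈ S then (W i).reverse else W i) m} =
      crossingNum n m ↔
    (∀ i, n i = 0) ∧ (∀ i j : Fin r, i ≠ j → m i j = m j i) := by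
  set WS := fun (S : Finset (Fin r)) i => if i ∈ S then (W i).reverse else W i
  have hWS : ∀ S i, IsGaussWord (WS S i) := fun S i => by
    by_cases hi : i ∈ S <;> simp [WS, hi, (hW i).reverse, hW i]
  have hWSc : ∀ S, WS Sᶜ = fun i => (WS S i).reverse := fun S => funext fun i => by
    by_cases hi : i ∈ S <;> simp [WS, hi]
  let X S := {v | ∃ σ k, v = basedLinkWd (WS S) m σ k}
  have hflat : sInf {v | ∃ S, v = linkWd (WS S) m} = sInf (⋃ S, X S) :=
    Nat.sInf_setOf_sInf_eq_sInf_iUnion X fun S => ⟨_, 1, 0, rfl⟩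
  rw [hflat, Nat.two_mul_sInf_eq_iff
    (Set.nonempty_iUnion.mpr ⟨∅, _, Set.mem_ofPred.mpr ⟨1, 0, rfl⟩⟩)]
  · simp only [X, Set.mem_iUnion, Set.mem_ofPred_eq, forall_exists_index]
    constructor
    · intro h
      have hWS0 : WS ∅ = W := funext fun i => by simp [WS]
      refine eq_zero_and_symm_of_basedLinkWd_const W m hW fun σ k τ l => ?_
      have := h (basedLinkWd W m σ k) ∅ σ k (by rw [hWS0])
      have := h (basedLinkWd W m τ l) ∅ τ l (by rw [hWS0])
      omega
    · rintro ⟨hn, hsym⟩ _ S σ k rfl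
      exact two_mul_basedLinkWd_of_eq_zero_of_symm _ m hn hsym σ k
  · rintro _ ⟨_, ⟨S, rfl⟩, σ, k, rfl⟩
    exact ⟨_, Set.mem_iUnion.mpr ⟨Sᶜ, _, _, rfl⟩,
      hWSc S ▸ basedLinkWd_add_reverse _ m (hWS S) σ k⟩

/-- `2 · d(|D|) = c(D)` iff every component is a simple closed curve
(`n i = 0`) and `m i j = m j i` for all `i ≠ j`. -/
theorem two_unoriented_wd_eq_crossingNum_iff (r : ℕ) (n : Fin r → ℕ)
    (W : ∀ i, List (Fin (n i) × Bool)) (m : Fin r → Fin r → ℕ)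
    (hW : ∀ i, IsGaussWord (W i)) (hm : ∀ i, m i i = 0) :
    2 * sInf {v | ∃ S : Finset (Fin r),
        v = linkWd (fun i => if i ∈ S then (W i).reverse else W i) m} =
      crossingNum n m ↔
    (∀ i, n i = 0) ∧ (∀ i j : Fin r, i ≠ j → m i j = m j i) :=
  two_unoriented_wd_eq_crossingNum_iff_general r n W m hW
end
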